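/- arXiv:2001.11697 — 3 statements merged into one kernel-verified Lean document; each statement's English description precedes it below -/
import Mathlib

section
/- Let E be a finite-dimensional real inner product space of dimension n, and let A and B be symmetric positive semidefinite linear endomorphisms of E, with eigenvalues listed in increasing order and counted with multiplicity: λ_0(A) ≤ … ≤ λ_{n-1}(A) and λ_0(B) ≤ … ≤ λ_{n-1}(B). Let ε ∈ [0,1). If |⟨(A−B)x, x⟩| ≤ ε·⟨Ax, x⟩ for every x ∈ E, then for every index i one has (1−ε)·λ_i(A) ≤ λ_i(B) ≤ (1+ε)·λ_i(A). -/
open RealInnerProductSpace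

/-!
Min–max argument. By counting dimensions there is an `x ≠ 0` in the span of the last `n - i`
eigenvectors of `A` and of the first `i + 1` eigenvectors of `B`; for it
`μA i ‖x‖² ≤ ⟪A x, x⟫` and `⟪B x, x⟫ ≤ μB i ‖x‖²`. Hence `⟪A x, x⟫ ≤ ⟪B x, x⟫` for all `x`
forces `μA i ≤ μB i`, and the hypothesis says exactly `(1 - ε) A ≤ B ≤ (1 + ε) A` in this order.
-/

namespace OrthonormalBasis

variable {ι E : Type*} [Fintype ι] [NormedAddCommGroup E] [InnerProductSpace ℝ E]
  {A : E →ₗ[ℝ] E} {μ : ι → ℝ}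

theorem inner_map_self_eq_sum_of_eigenbasis (b : OrthonormalBasis ι ℝ E)
    (hb : ∀ j, A (b j) = μ j • b j) (x : E) :
    ⟪A x, x⟫ = ∑ j, μ j * ⟪b j, x⟫ ^ 2 := by
  nth_rw 1 [← b.sum_repr' x]
  simp only [map_sum, map_smul, hb, smul_smul, sum_inner, real_inner_smul_left]
  exact Finset.sum_congr rfl fun j _ => by ring

theorem inner_eq_zero_of_mem_span_image (b : OrthonormalBasis ι ℝ E) {s : Set ι} {x : E}
    (hx : x ∈ Submodule.span ℝ (b '' s)) {j : ι} (hj : j ∉ s) : ⟪b j, x⟫ = 0 := by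
  have : Submodule.span ℝ (b '' s) ≤ (ℝ ∙ b j)ᗮ := by
    rw [Submodule.span_le]
    rintro _ ⟨k, hk, rfl⟩
    exact Submodule.mem_orthogonal_singleton_iff_inner_right.2
      (b.orthonormal.2 (ne_of_mem_of_not_mem hk hj).symm)
  exact Submodule.mem_orthogonal_singleton_iff_inner_right.1 (this hx)

theorem inner_map_self_le_of_mem_span_image (b : OrthonormalBasis ι ℝ E)
    (hb : ∀ j, A (b j) = μ j • b j) {s : Set ι} {c : ℝ} (hμ : ∀ j ∈ s, μ j ≤ c) {x : E}
    (hx : x ∈ Submodule.span ℝ (b '' s)) : ⟪A x, x⟫ ≤ c * ‖x‖ ^ 2 := by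
  rw [b.inner_map_self_eq_sum_of_eigenbasis hb, ← b.sum_sq_inner_right, Finset.mul_sum]
  refine Finset.sum_le_sum fun j _ => ?_
  by_cases hj : j ∈ s
  · exact mul_le_mul_of_nonneg_right (hμ j hj) (sq_nonneg _)
  · simp [b.inner_eq_zero_of_mem_span_image hx hj]

theorem le_inner_map_self_of_mem_span_image (b : OrthonormalBasis ι ℝ E)
    (hb : ∀ j, A (b j) = μ j • b j) {s : Set ι} {c : ℝ} (hμ : ∀ j ∈ s, c ≤ μ j) {x : E}
    (hx : x ∈ Submodule.span ℝ (b '' s)) : c * ‖x‖ ^ 2 ≤ ⟪A x, x⟫ := by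
  rw [b.inner_map_self_eq_sum_of_eigenbasis hb, ← b.sum_sq_inner_right, Finset.mul_sum]
  refine Finset.sum_le_sum fun j _ => ?_
  by_cases hj : j ∈ s
  · exact mul_le_mul_of_nonneg_right (hμ j hj) (sq_nonneg _)
  · simp [b.inner_eq_zero_of_mem_span_image hx hj]

theorem finrank_span_image (b : OrthonormalBasis ι ℝ E) (s : Finset ι) :
    Module.finrank ℝ (Submodule.span ℝ (b '' s)) = s.card := by
  rw [Set.image_eq_range, finrank_span_eq_card]
  · simp
  · exact b.orthonormal.linearIndependent.comp _ Subtype.val_injective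

theorem exists_ne_zero_mem_span_image_inf (b c : OrthonormalBasis ι ℝ E) {s t : Finset ι}
    (hst : Fintype.card ι < s.card + t.card) :
    ∃ x ≠ 0, x ∈ Submodule.span ℝ (b '' s) ∧ x ∈ Submodule.span ℝ (c '' t) := by
  have := b.toBasis.finiteDimensional_of_finite
  have hdisj : ¬ Disjoint (Submodule.span ℝ (b '' s)) (Submodule.span ℝ (c '' t)) := by
    intro h
    have := Submodule.finrank_add_finrank_le_of_disjoint h
    rw [b.finrank_span_image, c.finrank_span_image,
      Module.finrank_eq_card_basis b.toBasis] at this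
    omega
  obtain ⟨x, hx, hx0⟩ := Submodule.exists_mem_ne_zero_of_ne_bot (disjoint_iff.not.mp hdisj)
  exact ⟨x, hx0, Submodule.mem_inf.mp hx⟩

end OrthonormalBasis

theorem eigenvalue_le_of_inner_map_self_le {E : Type*} [NormedAddCommGroup E]
    [InnerProductSpace ℝ E] {n : ℕ} {A B : E →ₗ[ℝ] E} {μA μB : Fin n → ℝ}
    (hmA : Monotone μA) (hmB : Monotone μB) (bA bB : OrthonormalBasis (Fin n) ℝ E)
    (hbA : ∀ j, A (bA j) = μA j • bA j) (hbB : ∀ j, B (bB j) = μB j • bB j)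
    (hAB : ∀ x, ⟪A x, x⟫ ≤ ⟪B x, x⟫) (i : Fin n) : μA i ≤ μB i := by
  obtain ⟨x, hx0, hxA, hxB⟩ :=
    bA.exists_ne_zero_mem_span_image_inf bB (s := Finset.Ici i) (t := Finset.Iic i)
      (by simp only [Fintype.card_fin, Fin.card_Ici, Fin.card_Iic]; omega)
  have hA : μA i * ‖x‖ ^ 2 ≤ ⟪A x, x⟫ :=
    bA.le_inner_map_self_of_mem_span_image hbA (fun j hj => hmA (Finset.mem_Ici.mp hj)) hxA
  have hB : ⟪B x, x⟫ ≤ μB i * ‖x‖ ^ 2 :=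
    bB.inner_map_self_le_of_mem_span_image hbB (fun j hj => hmB (Finset.mem_Iic.mp hj)) hxB
  exact le_of_mul_le_mul_right ((hA.trans (hAB x)).trans hB) (by positivity)

theorem stmt0_general {E : Type*} [NormedAddCommGroup E] [InnerProductSpace ℝ E]
    {n : ℕ}
    (A B : E →ₗ[ℝ] E)
    (μA μB : Fin n → ℝ) (hmA : Monotone μA) (hmB : Monotone μB)
    (bA bB : OrthonormalBasis (Fin n) ℝ E)
    (hbA : ∀ i, A (bA i) = μA i • bA i) (hbB : ∀ i, B (bB i) = μB i • bB i)
    (ε : ℝ) (hε0 : 0 ≤ ε) (hε1 : ε < 1)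
    (h : ∀ x : E, |⟪(A - B) x, x⟫| ≤ ε * ⟪A x, x⟫) :
    ∀ i : Fin n, (1 - ε) * μA i ≤ μB i ∧ μB i ≤ (1 + ε) * μA i := by
  have hquad (x : E) : |⟪A x, x⟫ - ⟪B x, x⟫| ≤ ε * ⟪A x, x⟫ := by
    simpa only [LinearMap.sub_apply, inner_sub_left] using h x
  have hscaled (c : ℝ) (j : Fin n) : (c • A) (bA j) = (c * μA j) • bA j := by
    rw [LinearMap.smul_apply, hbA, smul_smul]
  intro i
  constructor
  · refine eigenvalue_le_of_inner_map_self_le (hmA.const_mul (by linarith)) hmB bA bB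
      (hscaled _) hbB (fun x => ?_) i
    rw [LinearMap.smul_apply, real_inner_smul_left]
    linarith [abs_le.mp (hquad x)]
  · refine eigenvalue_le_of_inner_map_self_le hmB (hmA.const_mul (by linarith)) bB bA
      hbB (hscaled _) (fun x => ?_) i
    rw [LinearMap.smul_apply, real_inner_smul_left]
    linarith [abs_le.mp (hquad x)]

/-- Belkin–Niyogi comparison lemma: if the quadratic form of `A - B` is
bounded by `ε` times that of `A`, then the increasingly ordered eigenvalues
(with multiplicity) of the symmetric positive semidefinite operators `A` and `B`
agree up to a factor `1 ± ε`. -/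
theorem stmt0 {E : Type*} [NormedAddCommGroup E] [InnerProductSpace ℝ E]
    [FiniteDimensional ℝ E] {n : ℕ} (hdim : Module.finrank ℝ E = n)
    (A B : E →ₗ[ℝ] E) (hA : A.IsSymmetric) (hB : B.IsSymmetric)
    (hApsd : ∀ x : E, 0 ≤ ⟪A x, x⟫) (hBpsd : ∀ x : E, 0 ≤ ⟪B x, x⟫)
    (μA μB : Fin n → ℝ) (hmA : Monotone μA) (hmB : Monotone μB)
    (bA bB : OrthonormalBasis (Fin n) ℝ E)
    (hbA : ∀ i, A (bA i) = μA i • bA i) (hbB : ∀ i, B (bB i) = μB i • bB i)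
    (ε : ℝ) (hε0 : 0 ≤ ε) (hε1 : ε < 1)
    (h : ∀ x : E, |⟪(A - B) x, x⟫| ≤ ε * ⟪A x, x⟫) :
    ∀ i : Fin n, (1 - ε) * μA i ≤ μB i ∧ μB i ≤ (1 + ε) * μA i :=
  stmt0_general A B μA μB hmA hmB bA bB hbA hbB ε hε0 hε1 h
end

section
/- Let λ : ℕ → ℝ be a sequence of nonnegative real numbers, let t ∈ (0,1], let α > 0, and let a ∈ ℓ²(ℕ, ℝ). Then ∑_{i} a_i²·(1 − exp(−λ_i t))/t ≥ (1/2)·min(α, 1/√t)·∑_{i : λ_i > α} a_i², where both series converge (the summands of the left-hand series are bounded by a_i²/t). -/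
/-!
The elementary inequality `1 - exp (-x) ≥ x / (1 + x) ≥ min x 1 / 2` for `x ≥ 0`, applied with
`x = λ t` and divided by `t`, bounds every weight `(1 - exp (-λ t)) / t` with `λ > α` from below by
`min α (1 / t) / 2 ≥ min α (1 / √t) / 2` (as `t ≤ 1`). The weights also lie in `[0, 1 / t]`, so
both series are dominated by `∑ aᵢ² / t`.
-/

open Real

lemma half_min_one_le_one_sub_exp_neg {x : ℝ} (hx : 0 ≤ x) : min x 1 / 2 ≤ 1 - exp (-x) := by
  have hexp : exp (-x) ≤ 1 / (1 + x) := by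
    rw [exp_neg, inv_eq_one_div]
    exact one_div_le_one_div_of_le (by linarith) (by linarith [add_one_le_exp x])
  have hfrac : min x 1 / 2 ≤ x / (1 + x) := by
    rw [le_div_iff₀ (by linarith)]
    rcases le_total x 1 with h | h
    · rw [min_eq_left h]; nlinarith
    · rw [min_eq_right h]; linarith
  have hsub : 1 - 1 / (1 + x) = x / (1 + x) := by field_simp; ring
  linarith

lemma half_min_inv_le_one_sub_exp_neg_mul_div {l t : ℝ} (hl : 0 ≤ l) (ht : 0 < t) :
    1 / 2 * min l (1 / t) ≤ (1 - exp (-(l * t))) / t := by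
  rw [le_div_iff₀ ht, mul_assoc, min_mul_of_nonneg _ _ ht.le, one_div_mul_cancel ht.ne']
  linarith [half_min_one_le_one_sub_exp_neg (mul_nonneg hl ht.le)]

lemma one_sub_exp_neg_mul_div_mem_Icc {l t : ℝ} (hl : 0 ≤ l) (ht : 0 < t) :
    (1 - exp (-(l * t))) / t ∈ Set.Icc 0 (1 / t) := by
  have hexp : exp (-(l * t)) ≤ 1 := exp_le_one_iff.mpr (by nlinarith)
  constructor
  · exact div_nonneg (by linarith) ht.le
  · gcongr
    linarith [exp_pos (-(l * t))]

lemma lp.summable_sq (a : lp (fun _ : ℕ => ℝ) 2) : Summable fun i => a i ^ 2 := by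
  simpa [sq] using lp.summable_inner (𝕜 := ℝ) a a

theorem stmt2_general (lam : ℕ → ℝ) (hlam : ∀ i, 0 ≤ lam i)
    (t : ℝ) (ht0 : 0 < t) (ht1 : t ≤ 1) (α : ℝ)
    (a : lp (fun _ : ℕ => ℝ) 2) :
    Summable (fun i : ℕ => (a i) ^ 2 * ((1 - Real.exp (-(lam i * t))) / t)) ∧
    Summable (fun i : {i : ℕ // α < lam i} => (a i.1) ^ 2) ∧
    (1 / 2) * min α (1 / Real.sqrt t) * (∑' i : {i : ℕ // α < lam i}, (a i.1) ^ 2) ≤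
      ∑' i : ℕ, (a i) ^ 2 * ((1 - Real.exp (-(lam i * t))) / t) := by
  set w : ℕ → ℝ := fun i => (1 - exp (-(lam i * t))) / t
  have hw i : w i ∈ Set.Icc 0 (1 / t) := one_sub_exp_neg_mul_div_mem_Icc (hlam i) ht0
  have hsum : Summable fun i => a i ^ 2 * w i :=
    (lp.summable_sq a |>.mul_right (1 / t)).of_nonneg_of_le
      (fun i => mul_nonneg (sq_nonneg _) (hw i).1)
      (fun i => mul_le_mul_of_nonneg_left (hw i).2 (sq_nonneg _))
  have hsub : Summable fun i : {i : ℕ // α < lam i} => a i.1 ^ 2 := (lp.summable_sq a).subtype _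
  have hweight (i : {i : ℕ // α < lam i}) : 1 / 2 * min α (1 / √t) ≤ w i := by
    have hsqrt : 1 / √t ≤ 1 / t :=
      one_div_le_one_div_of_le ht0 (le_sqrt_self_iff.mpr ht1)
    exact (mul_le_mul_of_nonneg_left (min_le_min i.2.le hsqrt) (by norm_num)).trans
      (half_min_inv_le_one_sub_exp_neg_mul_div (hlam i) ht0)
  refine ⟨hsum, hsub, ?_⟩
  calc 1 / 2 * min α (1 / √t) * ∑' i : {i : ℕ // α < lam i}, a i.1 ^ 2
      = ∑' i : {i : ℕ // α < lam i}, 1 / 2 * min α (1 / √t) * a i.1 ^ 2 := tsum_mul_left.symm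
    _ ≤ ∑' i : {i : ℕ // α < lam i}, a i.1 ^ 2 * w i :=
        (hsub.mul_left _).tsum_le_tsum (fun i =>
          (mul_le_mul_of_nonneg_right (hweight i) (sq_nonneg _)).trans_eq (mul_comm _ _))
          (hsum.subtype _)
    _ ≤ ∑' i, a i ^ 2 * w i :=
        Summable.tsum_subtype_le _ _ (fun i => mul_nonneg (sq_nonneg _) (hw i).1) hsum

/-- ℓ² version of the lower bound `⟨D_t f, f⟩ ≥ (1/2) min(α, 1/√t) ‖f₂‖²` from the
Belkin–Niyogi convergence proof, where `f₂` collects the coefficients with `λ_i > α`. -/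
theorem stmt2 (lam : ℕ → ℝ) (hlam : ∀ i, 0 ≤ lam i)
    (t : ℝ) (ht0 : 0 < t) (ht1 : t ≤ 1) (α : ℝ) (hα : 0 < α)
    (a : lp (fun _ : ℕ => ℝ) 2) :
    Summable (fun i : ℕ => (a i) ^ 2 * ((1 - Real.exp (-(lam i * t))) / t)) ∧
    Summable (fun i : {i : ℕ // α < lam i} => (a i.1) ^ 2) ∧
    (1 / 2) * min α (1 / Real.sqrt t) * (∑' i : {i : ℕ // α < lam i}, (a i.1) ^ 2) ≤
      ∑' i : ℕ, (a i) ^ 2 * ((1 - Real.exp (-(lam i * t))) / t) :=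
  stmt2_general lam hlam t ht0 ht1 α a
end

section
/- Let N, d ≥ 1, let S be a real symmetric (N·d)×(N·d) matrix, and let v_1, …, v_{Nd} be an orthonormal basis of ℝ^{Nd} consisting of eigenvectors of S, with S·v_l = λ_l·v_l. For x ∈ ℝ^{Nd} and 1 ≤ i ≤ N write x(i) ∈ ℝ^d for the i-th block of x (the coordinates with indices (i−1)d+1, …, id). Then for every k ∈ ℕ and all 1 ≤ i,j ≤ N, the (i,j)-th d×d block S^{2k}(i,j) of the matrix power S^{2k} satisfies ‖S^{2k}(i,j)‖_{HS}² = ∑_{l,r=1}^{Nd} (λ_l·λ_r)^{2k}·⟨v_l(i), v_r(i)⟩·⟨v_l(j), v_r(j)⟩, where ‖·‖_{HS} is the Frobenius norm of the d×d block and ⟨·,·⟩ is the Euclidean inner product of ℝ^d. -/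
/-!
The orthonormal eigenvectors diagonalize `S`, so `S ^ m = V diag(λ ^ m) Vᵀ` for the matrix `V`
with columns `v_l`; entrywise `S ^ m (a, b) = ∑_l λ_l ^ m v_l(a) v_l(b)`. Each block of `S ^ m`
is therefore a weighted sum of outer products `v_l(i) v_l(j)ᵀ`, and expanding the square of its
Frobenius norm pairs the outer products into the two Gram factors `⟨v_l(i), v_r(i)⟩` and
`⟨v_l(j), v_r(j)⟩`.
-/

open Matrix

/-- The index in `Fin (N * d)` of the `r`-th coordinate of the `i`-th `d`-dimensional
block of a vector in `ℝ^{Nd}`. -/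
def blockIdx {N d : ℕ} (i : Fin N) (r : Fin d) : Fin (N * d) :=
  ⟨i.1 * d + r.1, by
    have h1 : i.1 * d + r.1 < (i.1 + 1) * d := by
      have := r.2; nlinarith
    have h2 : (i.1 + 1) * d ≤ N * d := Nat.mul_le_mul_right d i.2
    omega⟩

theorem Matrix.pow_eq_mul_diagonal_pow_mul_transpose {n R : Type*} [Fintype n] [DecidableEq n]
    [CommRing R] {S V : Matrix n n R} {lam : n → R} (hV : Vᵀ * V = 1)
    (hSV : S * V = V * diagonal lam) (m : ℕ) : S ^ m = V * diagonal (lam ^ m) * Vᵀ := by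
  have hconj : SemiconjBy V (diagonal lam) S := hSV.symm
  calc S ^ m = S ^ m * V * Vᵀ := by rw [mul_assoc, mul_eq_one_comm.mp hV, mul_one]
    _ = V * diagonal (lam ^ m) * Vᵀ := by rw [← (hconj.pow_right m).eq, diagonal_pow]

theorem Matrix.mul_diagonal_mul_transpose_apply {m n R : Type*} [Fintype n] [DecidableEq n]
    [CommSemiring R] (V : Matrix m n R) (c : n → R) (a b : m) :
    (V * diagonal c * Vᵀ) a b = ∑ l, c l * V a l * V b l := by
  rw [mul_apply]
  simp only [mul_diagonal, transpose_apply]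
  exact Finset.sum_congr rfl fun l _ => by ring

theorem sum_sum_sq_sum_outer {ι κ μ R : Type*} [Fintype ι] [Fintype κ] [Fintype μ]
    [CommSemiring R] (c : ι → R) (x : ι → κ → R) (y : ι → μ → R) :
    ∑ r, ∑ s, (∑ l, c l * x l r * y l s) ^ 2
      = ∑ l, ∑ l', c l * c l' * (∑ r, x l r * x l' r) * (∑ s, y l s * y l' s) := by
  calc ∑ r, ∑ s, (∑ l, c l * x l r * y l s) ^ 2
      = ∑ r, ∑ s, ∑ l, ∑ l', c l * c l' * (x l r * x l' r) * (y l s * y l' s) := by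
        simp only [sq, Finset.sum_mul_sum]
        exact Fintype.sum_congr _ _ fun r => Fintype.sum_congr _ _ fun s =>
          Fintype.sum_congr _ _ fun l => Fintype.sum_congr _ _ fun l' => by ring
    _ = ∑ l, ∑ l', ∑ r, ∑ s, c l * c l' * (x l r * x l' r) * (y l s * y l' s) := by
        rw [← Fintype.sum_prod_type', Finset.sum_comm]
        refine Fintype.sum_congr _ _ fun l => ?_
        rw [Finset.sum_comm]
        simp only [Fintype.sum_prod_type]
    _ = _ := by
        refine Fintype.sum_congr _ _ fun l => Fintype.sum_congr _ _ fun l' => ?_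
        rw [mul_assoc, Finset.sum_mul_sum, Finset.mul_sum]
        simp only [Finset.mul_sum, mul_assoc]

theorem stmt8_general (N d : ℕ)
    (S : Matrix (Fin (N * d)) (Fin (N * d)) ℝ)
    (lam : Fin (N * d) → ℝ) (v : Fin (N * d) → Fin (N * d) → ℝ)
    (hortho : ∀ l r, (∑ q, v l q * v r q) = if l = r then (1 : ℝ) else 0)
    (heig : ∀ l, S *ᵥ v l = lam l • v l)
    (k : ℕ) (i j : Fin N) :
    ∑ r : Fin d, ∑ s : Fin d, ((S ^ (2 * k)) (blockIdx i r) (blockIdx j s)) ^ 2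
      = ∑ l, ∑ r, (lam l * lam r) ^ (2 * k) *
          (∑ q : Fin d, v l (blockIdx i q) * v r (blockIdx i q)) *
          (∑ q : Fin d, v l (blockIdx j q) * v r (blockIdx j q)) := by
  set V := (Matrix.of v)ᵀ
  have hV : Vᵀ * V = 1 := by
    ext l r
    simpa [V, mul_apply, one_apply] using hortho l r
  have hSV : S * V = V * diagonal lam := by
    ext a l
    rw [mul_diagonal]
    simpa [V, mul_apply, mulVec, dotProduct, mul_comm] using congrFun (heig l) a
  have hentry (a b) : (S ^ (2 * k)) a b = ∑ l, lam l ^ (2 * k) * v l a * v l b := by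
    rw [pow_eq_mul_diagonal_pow_mul_transpose hV hSV, mul_diagonal_mul_transpose_apply]
    rfl
  simp only [hentry, sum_sum_sq_sum_outer, mul_pow]

/-- Singer–Wu identity: for a symmetric matrix `S` with orthonormal eigenbasis
`v_l` (eigenvalues `λ_l`), the squared Hilbert–Schmidt norm of the `(i,j)`-th
`d×d` block of `S^{2k}` equals
`∑_{l,r} (λ_l λ_r)^{2k} ⟨v_l(i), v_r(i)⟩ ⟨v_l(j), v_r(j)⟩`. -/
theorem stmt8 (N d : ℕ) (hN : 1 ≤ N) (hd : 1 ≤ d)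
    (S : Matrix (Fin (N * d)) (Fin (N * d)) ℝ) (hS : S.IsSymm)
    (lam : Fin (N * d) → ℝ) (v : Fin (N * d) → Fin (N * d) → ℝ)
    (hortho : ∀ l r, (∑ q, v l q * v r q) = if l = r then (1 : ℝ) else 0)
    (heig : ∀ l, S *ᵥ v l = lam l • v l)
    (k : ℕ) (i j : Fin N) :
    ∑ r : Fin d, ∑ s : Fin d, ((S ^ (2 * k)) (blockIdx i r) (blockIdx j s)) ^ 2
      = ∑ l, ∑ r, (lam l * lam r) ^ (2 * k) *
          (∑ q : Fin d, v l (blockIdx i q) * v r (blockIdx i q)) *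
          (∑ q : Fin d, v l (blockIdx j q) * v r (blockIdx j q)) :=
  stmt8_general N d S lam v hortho heig k i j
end
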